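/- Let E and E₁ be finite-dimensional real inner product spaces, A : E → E₁ a linear map with adjoint A*, f ∈ E₁, λ > 0, and J̃ : E → ℝ a convex function. Let v̄ ∈ E with A v̄ = f and q̄ ∈ E₁ be such that A*q̄ is a subgradient of J̃ at v̄. Suppose (v_k)_{k≥1} in E and (q_k)_{k≥0} in E₁ satisfy, for every k ≥ 1: A*q_k is a subgradient of J̃ at v_k, and q_k = q_{k-1} + 2λ(f − A v_k). Then the sequence (‖q_k − q̄‖)_{k≥0} is nonincreasing; in particular ‖q_k − q̄‖ ≤ ‖q_0 − q̄‖ for all k ≥ 1. -/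
import Mathlib


open RealInnerProductSpace

/-- For the augmented Lagrangian (Bregman) iteration applied to a convex
function `J` with linear constraint `A v = f`, the distances `‖q_k − q̄‖` to any Lagrange
multiplier `q̄` form a nonincreasing sequence; in particular `‖q_k − q̄‖ ≤ ‖q_0 − q̄‖`
for all `k ≥ 1`. -/
theorem statement1 {E E₁ : Type*}
    [NormedAddCommGroup E] [InnerProductSpace ℝ E] [FiniteDimensional ℝ E]
    [NormedAddCommGroup E₁] [InnerProductSpace ℝ E₁] [FiniteDimensional ℝ E₁]
    (A : E →ₗ[ℝ] E₁) (f : E₁) (lam : ℝ) (hlam : 0 < lam)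
    (J : E → ℝ) (hJ : ConvexOn ℝ Set.univ J)
    (vbar : E) (hvbarf : A vbar = f) (qbar : E₁)
    (hqbar : ∀ w, J vbar + ⟪(LinearMap.adjoint A) qbar, w - vbar⟫ ≤ J w)
    (v : ℕ → E) (q : ℕ → E₁)
    (hsub : ∀ k : ℕ, ∀ w, J (v (k + 1)) +
      ⟪(LinearMap.adjoint A) (q (k + 1)), w - v (k + 1)⟫ ≤ J w)
    (hq : ∀ k : ℕ, q (k + 1) = q k + (2 * lam) • (f - A (v (k + 1)))) :
    (∀ k : ℕ, ‖q (k + 1) - qbar‖ ≤ ‖q k - qbar‖) ∧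
      (∀ k ≥ 1, ‖q k - qbar‖ ≤ ‖q 0 - qbar‖) := by
  have hmain : ∀ k : ℕ, ‖q (k + 1) - qbar‖ ≤ ‖q k - qbar‖ := by
    intro k
    set d : E₁ := f - A (v (k + 1)) with hd
    -- monotonicity of subdifferential
    have h1 := hsub k vbar
    have h2 := hqbar (v (k + 1))
    have hsum : ⟪(LinearMap.adjoint A) (q (k + 1)), vbar - v (k + 1)⟫ +
        ⟪(LinearMap.adjoint A) qbar, v (k + 1) - vbar⟫ ≤ 0 := by linarith
    have hadj : ∀ x : E₁, ∀ y : E, ⟪(LinearMap.adjoint A) x, y⟫ = ⟪x, A y⟫ := by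
      intro x y
      rw [real_inner_comm, LinearMap.adjoint_inner_right, real_inner_comm]
    rw [hadj, hadj] at hsum
    have hkey : ⟪q (k + 1) - qbar, d⟫ ≤ 0 := by
      have : ⟪q (k + 1) - qbar, d⟫ =
          ⟪q (k + 1), A (vbar - v (k + 1))⟫ + ⟪qbar, A (v (k + 1) - vbar)⟫ := by
        simp only [hd, map_sub, hvbarf, inner_sub_left, inner_sub_right]
        ring
      linarith [this ▸ hsum]
    -- q k - qbar = (q (k+1) - qbar) - (2λ) • d
    have heq : q k - qbar = (q (k + 1) - qbar) - (2 * lam) • d := by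
      rw [hq k]; abel
    have hnorm : ‖q (k + 1) - qbar‖ ^ 2 ≤ ‖q k - qbar‖ ^ 2 := by
      rw [heq]
      have hexp : ‖(q (k + 1) - qbar) - (2 * lam) • d‖ ^ 2 =
          ‖q (k + 1) - qbar‖ ^ 2 - 2 * ((2 * lam) * ⟪q (k + 1) - qbar, d⟫) +
            (2 * lam) ^ 2 * ‖d‖ ^ 2 := by
        rw [← real_inner_self_eq_norm_sq, ← real_inner_self_eq_norm_sq,
          ← real_inner_self_eq_norm_sq]
        simp only [inner_sub_left, inner_sub_right, inner_smul_left, inner_smul_right,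
          RCLike.conj_to_real]
        rw [real_inner_comm d (q (k + 1)), real_inner_comm d qbar]
        ring
      nlinarith [sq_nonneg ‖d‖, sq_nonneg (2 * lam)]
    nlinarith [norm_nonneg (q (k + 1) - qbar), norm_nonneg (q k - qbar)]
  refine ⟨hmain, ?_⟩
  intro k hk
  induction k with
  | zero => exact le_refl _
  | succ n ih =>
    rcases Nat.eq_zero_or_pos n with h0 | hp
    · subst h0; exact hmain 0
    · exact le_trans (hmain n) (ih hp)
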